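/- The unnormalized atomic Green's function Ḡ(iω₀|μ) = (1 + e^{β(μ-ε_σ)})/(iπ/β + μ - ε_σ) + e^{β(μ-ε_{σ̄})}(1 + e^{β(μ-ε_σ-U)})/(iπ/β + μ - ε_σ - U) is holomorphic in μ on the strip {-2π/β < Im μ ≤ 0}: each apparent pole is cancelled by a zero of its numerator. -/

import Mathlib

/-!
At `μ = a - iπ/β` the exponent `β (μ - a)` equals `-iπ`, so `1 + e^{β(μ - a)}` vanishes there.
A holomorphic function vanishing at `c`, divided by `μ - c`, is its `dslope` at `c` away from `c`,
and `dslope` of an entire function is entire: both apparent poles of `Ḡ` are removable.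
-/

open Complex

theorem Differentiable.dslope {E : Type*} [NormedAddCommGroup E] [NormedSpace ℂ E]
    [CompleteSpace E] {f : ℂ → E} (hf : Differentiable ℂ f) (c : ℂ) : Differentiable ℂ (dslope f c) := by
  rw [← differentiableOn_univ, differentiableOn_dslope Filter.univ_mem]
  exact hf.differentiableOn

theorem dslope_eq_div_of_eq_zero {f : ℂ → ℂ} {c z : ℂ} (hc : f c = 0) (hz : z ≠ c) :
    dslope f c z = f z / (z - c) := by
  rw [dslope_of_ne f hz, slope_def_field, hc, sub_zero]

theorem one_add_exp_mul_neg_pi_div_mul_I {β : ℝ} (hβ : β ≠ 0) :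
    1 + exp (β * -(Real.pi / β * I)) = 0 := by
  have hβ' : (β : ℂ) ≠ 0 := ofReal_ne_zero.mpr hβ
  rw [mul_neg, ← mul_assoc, mul_div_cancel₀ _ hβ', exp_neg, exp_pi_mul_I]
  norm_num

/-- The unnormalized atomic Green's function is holomorphic in μ on the strip
`{-2π/β < Im μ ≤ 0}`: each apparent pole is cancelled by a zero of its numerator. -/
theorem atomic_Gbar_holomorphic (β εσ εσb U : ℝ) (hβ : 0 < β) :
    (1 + Complex.exp (β * (((εσ : ℂ) - Real.pi / β * I) - εσ)) = 0) ∧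
    (1 + Complex.exp (β * (((εσ : ℂ) + U - Real.pi / β * I) - εσ - U)) = 0) ∧
    ∃ g : ℂ → ℂ,
      DifferentiableOn ℂ g {μ : ℂ | -(2 * Real.pi) / β < μ.im ∧ μ.im ≤ 0} ∧
      ∀ μ ∈ {μ : ℂ | -(2 * Real.pi) / β < μ.im ∧ μ.im ≤ 0},
        μ ≠ (εσ : ℂ) - Real.pi / β * I → μ ≠ (εσ : ℂ) + U - Real.pi / β * I →
        g μ = (1 + Complex.exp (β * (μ - εσ))) / (Real.pi / β * I + μ - εσ)
            + Complex.exp (β * (μ - εσb)) * (1 + Complex.exp (β * (μ - εσ - U)))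
              / (Real.pi / β * I + μ - εσ - U) := by
  set c₁ : ℂ := εσ - Real.pi / β * I
  set c₂ : ℂ := εσ + U - Real.pi / β * I
  set f₁ : ℂ → ℂ := fun μ => 1 + exp (β * (μ - εσ))
  set f₂ : ℂ → ℂ := fun μ => 1 + exp (β * (μ - εσ - U))
  have hzero : 1 + exp (β * -(Real.pi / β * I)) = 0 := one_add_exp_mul_neg_pi_div_mul_I hβ.ne'
  have h₁ : f₁ c₁ = 0 := by simpa only [f₁, c₁, sub_sub_cancel_left] using hzero
  have h₂ : f₂ c₂ = 0 := by convert hzero using 4; simp only [c₂]; ring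
  refine ⟨h₁, h₂, fun μ => dslope f₁ c₁ μ + exp (β * (μ - εσb)) * dslope f₂ c₂ μ, ?_, ?_⟩
  · have hf₁ : Differentiable ℂ f₁ := by fun_prop
    have hf₂ : Differentiable ℂ f₂ := by fun_prop
    exact ((hf₁.dslope c₁).add
      ((by fun_prop : Differentiable ℂ fun μ => exp (β * (μ - εσb))).mul
        (hf₂.dslope c₂))).differentiableOn
  · intro μ _ hμ₁ hμ₂
    beta_reduce
    rw [dslope_eq_div_of_eq_zero h₁ hμ₁, dslope_eq_div_of_eq_zero h₂ hμ₂, mul_div_assoc]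
    have hd₁ : μ - c₁ = Real.pi / β * I + μ - εσ := by ring
    have hd₂ : μ - c₂ = Real.pi / β * I + μ - εσ - U := by ring
    rw [hd₁, hd₂]
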